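/- arXiv:1110.1791 — 2 statements merged into one kernel-verified Lean document; each statement's English description precedes it below -/
import Mathlib

section
/- Assume conditions (P) and (S), and let v ∈ ℝ² with v₁ ≥ 0 and v₂ ≥ 0. Write n = n^Γ(θ̃^(1,r)). Then: (i) if γ₂(θ^(1,max)) > 0 and θ̃^(1,r)₁ ≤ θ^(2,max)₁, then sup{⟨v, θ⟩ : θ ∈ 𝒟^(1)} = ⟨v, θ̃^(1,r)⟩; (ii) if γ₂(θ^(1,max)) > 0, θ̃^(1,r)₁ > θ^(2,max)₁ and v is below or on n (that is, n₁v₂ − n₂v₁ ≤ 0), then sup{⟨v, θ⟩ : θ ∈ 𝒟^(1)} = ⟨v, θ̃^(1,r)⟩; (iii) if γ₂(θ^(1,max)) > 0, θ̃^(1,r)₁ > θ^(2,max)₁ and v is above n (that is, n₁v₂ − n₂v₁ > 0), then sup{⟨v, θ⟩ : θ ∈ 𝒟^(1)} = sup{⟨v, θ⟩ : θ ∈ Γ}; (iv) if γ₂(θ^(1,max)) ≤ 0, then sup{⟨v, θ⟩ : θ ∈ 𝒟^(1)} = sup{⟨v, θ⟩ : θ ∈ Γ}. -/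
open Matrix Set

noncomputable section

abbrev V : Type := Fin 2 → ℝ

def gam (S : Matrix (Fin 2) (Fin 2) ℝ) (μ : V) (θ : V) : ℝ :=
  -(1/2) * (θ ⬝ᵥ S.mulVec θ) - μ ⬝ᵥ θ

def gam1 (R : Matrix (Fin 2) (Fin 2) ℝ) (θ : V) : ℝ := R 0 0 * θ 0 + R 1 0 * θ 1
def gam2 (R : Matrix (Fin 2) (Fin 2) ℝ) (θ : V) : ℝ := R 0 1 * θ 0 + R 1 1 * θ 1

def condP (R : Matrix (Fin 2) (Fin 2) ℝ) : Prop :=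
  0 < R 0 0 ∧ 0 < R 1 1 ∧ 0 < R 0 0 * R 1 1 - R 0 1 * R 1 0

def condS (μ : V) (R : Matrix (Fin 2) (Fin 2) ℝ) : Prop :=
  R 1 1 * μ 0 - R 0 1 * μ 1 < 0 ∧ R 0 0 * μ 1 - R 1 0 * μ 0 < 0

def pvec1 (R : Matrix (Fin 2) (Fin 2) ℝ) : V := ![R 1 1, -(R 0 1)]
def pvec2 (R : Matrix (Fin 2) (Fin 2) ℝ) : V := ![-(R 1 0), R 0 0]

def θray1 (S : Matrix (Fin 2) (Fin 2) ℝ) (μ : V) (R : Matrix (Fin 2) (Fin 2) ℝ) : V :=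
  (-2 * (μ ⬝ᵥ pvec1 R) / (pvec1 R ⬝ᵥ S.mulVec (pvec1 R))) • pvec1 R

def θray2 (S : Matrix (Fin 2) (Fin 2) ℝ) (μ : V) (R : Matrix (Fin 2) (Fin 2) ℝ) : V :=
  (-2 * (μ ⬝ᵥ pvec2 R) / (pvec2 R ⬝ᵥ S.mulVec (pvec2 R))) • pvec2 R

def Gam (S : Matrix (Fin 2) (Fin 2) ℝ) (μ : V) : Set V := {θ | 0 < gam S μ θ}

def ltc (θ θ' : V) : Prop := ∀ i, θ i < θ' i

def Gmax (S : Matrix (Fin 2) (Fin 2) ℝ) (μ : V) : Set V :=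
  {θ | ∃ θ' ∈ Gam S μ, ltc θ θ'}

def Dset (S : Matrix (Fin 2) (Fin 2) ℝ) (μ : V) (i : Fin 2) (c : ℝ) : Set V :=
  {θ | ∃ θ' ∈ Gam S μ, ltc θ θ' ∧ θ' i < c}

/-!
Write `n(θ) = Σθ + μ`. The expansion `γ(t + u) = γ(t) - ⟨n(t), u⟩ - ½⟨u, Σu⟩` with `Σ` positive
definite shows that `Γ` lies strictly inside the tangent line at every `t ∈ ∂Γ`, that `θ^(i,max)_i`
bounds `θ_i` strictly on `Γ`, and that the normal at `θ^(i,max)` is parallel to the `i`-th axis.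

If `γ₂(θ^(1,max)) > 0`, then `θ^(1,r) ≠ θ^(1,max)`, so `θ̃^(1,r)` is the other end of the vertical
chord of `∂Γ` through `θ^(1,r)`, and `θ^(1,Γ)₁ = θ̃^(1,r)₁`. The tangent line at `θ^(1,r)` has
`θ^(1,max)`, which lies above the line `γ₂ = 0`, on its inner side; this forces `n(θ^(1,r))₂ ≤ 0`,
and since the ends of a vertical chord have opposite nonzero `n₂`, `n(θ̃^(1,r))₂ > 0`. Hence
`θ̃^(1,r)` is a limit of points of `Γ` to its left, and up to closure and the componentwise order
`𝒟^(1)` is the part of `Γ` left of `θ̃^(1,r)`. The tangent line at `θ̃^(1,r)` bounds `⟨v, ·⟩` by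
`⟨v, θ̃^(1,r)⟩` on that part when `v` is below `n` (in case (i), `θ̃^(1,r)₁ ≤ θ^(2,max)₁` gives
`n₁ ≤ 0`, so every `v ≥ 0` is), and on the rest of `Γ` when `v` is above `n`. In case (iv),
`θ^(1,Γ) = θ^(1,max)` and all of `Γ` lies left of it.
-/

open Filter Topology

theorem Real.sSup_eq_sSup_of_forall_exists_le_closure {A B : Set ℝ}
    (hAB : ∀ a ∈ A, ∃ b ∈ B, a ≤ b) (hBA : ∀ b ∈ B, ∃ a ∈ closure A, b ≤ a) :
    sSup A = sSup B := by
  have hub : upperBounds A = upperBounds B := by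
    refine Subset.antisymm (fun r hr b hb => ?_) (fun r hr a ha => ?_)
    · obtain ⟨a, ha, hba⟩ := hBA b hb
      exact hba.trans (((upperBounds_closure A).symm ▸ hr : r ∈ upperBounds (closure A)) ha)
    · obtain ⟨b, hb, hab⟩ := hAB a ha
      exact hab.trans (hr hb)
  have hne : A.Nonempty ↔ B.Nonempty :=
    ⟨fun ⟨a, ha⟩ => let ⟨b, hb, _⟩ := hAB a ha; ⟨b, hb⟩,
     fun ⟨b, hb⟩ => let ⟨_, ha, _⟩ := hBA b hb; closure_nonempty_iff.mp ⟨_, ha⟩⟩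
  have hbdd : BddAbove A ↔ BddAbove B := by rw [BddAbove, BddAbove, hub]
  by_cases hB : B.Nonempty ∧ BddAbove B
  · exact (isLUB_csSup (hne.2 hB.1) (hbdd.2 hB.2)).unique
      ((isLUB_congr hub).2 (isLUB_csSup hB.1 hB.2))
  · rw [Real.sSup_def, Real.sSup_def, dif_neg hB, dif_neg (by rwa [hne, hbdd])]

theorem exists_pos_quadratic_eq_zero {a b c : ℝ} (ha : 0 < a) (hc : c < 0) :
    ∃ x, 0 < x ∧ a * (x * x) + b * x + c = 0 := by
  have hD : b ^ 2 < discrim a b c := by unfold discrim; nlinarith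
  have hsqrt : b < √(discrim a b c) :=
    (le_abs_self b).trans_lt (Real.sqrt_sq_eq_abs b ▸ Real.sqrt_lt_sqrt (sq_nonneg b) hD)
  refine ⟨(-b + √(discrim a b c)) / (2 * a), by apply div_pos <;> linarith, ?_⟩
  rw [quadratic_eq_zero_iff ha.ne' (Real.mul_self_sqrt (by linarith [sq_nonneg b])).symm]
  exact Or.inl rfl

def gamNormal (S : Matrix (Fin 2) (Fin 2) ℝ) (μ θ : V) : V := S *ᵥ θ + μ

section
variable {S R : Matrix (Fin 2) (Fin 2) ℝ} {μ : V}

theorem gam_add_smul (hS : S.IsHermitian) (θ d : V) (s : ℝ) :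
    gam S μ (θ + s • d) =
      gam S μ θ - s * (gamNormal S μ θ ⬝ᵥ d) - s ^ 2 / 2 * (d ⬝ᵥ S *ᵥ d) := by
  have h10 : S 1 0 = S 0 1 := by simpa using hS.apply 0 1
  simp only [gam, gamNormal, dotProduct, mulVec, Fin.sum_univ_two, Pi.add_apply,
    Pi.smul_apply, smul_eq_mul, h10]
  ring

theorem gamNormal_dotProduct_sub_le (hS : S.PosDef) (t θ : V) :
    gamNormal S μ t ⬝ᵥ (θ - t) ≤ gam S μ t - gam S μ θ := by
  have h := gam_add_smul (μ := μ) hS.isHermitian t (θ - t) 1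
  rw [one_smul, add_sub_cancel] at h
  have hq := hS.posSemidef.dotProduct_mulVec_nonneg (θ - t)
  rw [star_trivial] at hq
  linarith

theorem lt_of_mem_Gam (hS : S.PosDef) {i : Fin 2} {m : ℝ}
    (hmax : ∀ θ, gam S μ θ = 0 → θ i ≤ m) {θ : V} (hθ : θ ∈ Gam S μ) : θ i < m := by
  obtain ⟨s, hs, hroot⟩ := exists_pos_quadratic_eq_zero (b := gamNormal S μ θ i)
    (half_pos (hS.diag_pos (i := i))) (neg_lt_zero.mpr hθ)
  have hbd : gam S μ (θ + s • Pi.single i 1) = 0 := by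
    rw [gam_add_smul hS.isHermitian]
    simp only [dotProduct_single, mulVec_single, MulOpposite.op_one, one_smul, single_dotProduct,
      col_apply, mul_one, one_mul]
    linarith
  have := hmax _ hbd
  simp only [Pi.add_apply, Pi.smul_apply, Pi.single_eq_same, smul_eq_mul, mul_one] at this
  linarith

theorem gamNormal_eq_zero_of_isMax (hS : S.PosDef) {i j : Fin 2} (hij : j ≠ i) {θm : V}
    (hθm : gam S μ θm = 0) (hmax : ∀ θ, gam S μ θ = 0 → θ i ≤ θm i) :
    gamNormal S μ θm j = 0 := by
  by_contra hne
  have hSjj : 0 < S j j := hS.diag_pos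
  have hmem : θm + (-gamNormal S μ θm j / S j j) • Pi.single j 1 ∈ Gam S μ := by
    show 0 < gam S μ _
    rw [gam_add_smul hS.isHermitian, hθm]
    simp only [dotProduct_single, mulVec_single, MulOpposite.op_one, one_smul, single_dotProduct,
      col_apply, mul_one, one_mul]
    field_simp
    ring_nf
    positivity
  have := lt_of_mem_Gam hS hmax hmem
  simp [hij.symm] at this

theorem eventually_mem_Gam (hS : S.IsHermitian) {t d : V} (ht : gam S μ t = 0)
    (hd : gamNormal S μ t ⬝ᵥ d < 0) : ∀ᶠ s in 𝓝[>] (0 : ℝ), t + s • d ∈ Gam S μ := by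
  have hlim : Tendsto (fun s : ℝ => -(gamNormal S μ t ⬝ᵥ d) - s / 2 * (d ⬝ᵥ S *ᵥ d)) (𝓝 0)
      (𝓝 (-(gamNormal S μ t ⬝ᵥ d))) := by
    have : Continuous fun s : ℝ => -(gamNormal S μ t ⬝ᵥ d) - s / 2 * (d ⬝ᵥ S *ᵥ d) := by
      fun_prop
    simpa using this.tendsto 0
  filter_upwards [self_mem_nhdsWithin,
    nhdsWithin_le_nhds (hlim.eventually_const_lt (neg_pos.mpr hd))] with s (hs : 0 < s) hpos
  show 0 < gam S μ _
  rw [gam_add_smul hS, ht]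
  nlinarith [mul_pos hs hpos]

theorem mem_closure_Dset {i : Fin 2} {c : ℝ} {θ : V} (hθ : θ ∈ Gam S μ) (hc : θ i < c) :
    θ ∈ closure (Dset S μ i c) := by
  have hlim : Tendsto (fun s : ℝ => θ - s • 1) (𝓝[>] 0) (𝓝 θ) := by
    have : Continuous fun s : ℝ => θ - s • (1 : V) := by fun_prop
    simpa using (this.tendsto 0).mono_left nhdsWithin_le_nhds
  refine mem_closure_of_tendsto hlim ?_
  filter_upwards [self_mem_nhdsWithin] with s (hs : 0 < s)
  exact ⟨θ, hθ, fun k => by simpa using hs, hc⟩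

theorem mem_closure_Dset_of_gamNormal_one_pos (hS : S.IsHermitian) {t : V} (ht : gam S μ t = 0)
    (hn : 0 < gamNormal S μ t 1) : t ∈ closure (Dset S μ 0 (t 0)) := by
  set n := gamNormal S μ t
  -- `d` points strictly into `Γ` and strictly to the left
  set d : V := ![-n 1, n 0 - n 1]
  have hd : n ⬝ᵥ d < 0 := by
    simp only [d, dotProduct, Fin.sum_univ_two, Matrix.cons_val_zero, Matrix.cons_val_one]
    nlinarith
  have hlim : Tendsto (fun s : ℝ => t + s • d) (𝓝[>] 0) (𝓝 t) := by
    have : Continuous fun s : ℝ => t + s • d := by fun_prop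
    simpa using (this.tendsto 0).mono_left nhdsWithin_le_nhds
  have hmem : t ∈ closure (Gam S μ ∩ {θ | θ 0 < t 0}) := by
    refine mem_closure_of_tendsto hlim ?_
    filter_upwards [eventually_mem_Gam hS ht hd, self_mem_nhdsWithin] with s hΓ (hs : 0 < s)
    refine ⟨hΓ, show t 0 + s * (-n 1) < t 0 by nlinarith⟩
  exact closure_minimal (fun θ hθ => mem_closure_Dset hθ.1 hθ.2) isClosed_closure hmem

theorem gam_smul_eq_zero {p : V} (hp : p ⬝ᵥ S *ᵥ p ≠ 0) :
    gam S μ ((-2 * (μ ⬝ᵥ p) / (p ⬝ᵥ S *ᵥ p)) • p) = 0 := by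
  simp only [gam, mulVec_smul, dotProduct_smul, smul_dotProduct, smul_eq_mul]
  field_simp
  ring

theorem gamNormal_smul_dotProduct {p : V} (hp : p ⬝ᵥ S *ᵥ p ≠ 0) :
    gamNormal S μ ((-2 * (μ ⬝ᵥ p) / (p ⬝ᵥ S *ᵥ p)) • p) ⬝ᵥ p = -(μ ⬝ᵥ p) := by
  simp only [gamNormal, mulVec_smul, add_dotProduct, smul_dotProduct, smul_eq_mul]
  rw [dotProduct_comm (S *ᵥ p)]
  field_simp
  ring

theorem gamNormal_one_pos_of_vertical (hS : S.PosDef) {r t : V} (hr : gam S μ r = 0)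
    (ht : gam S μ t = 0) (h0 : t 0 = r 0) (h1 : t 1 ≠ r 1) (hrn : gamNormal S μ r 1 ≤ 0) :
    0 < gamNormal S μ t 1 := by
  have hS11 : 0 < S 1 1 := hS.diag_pos
  have htr : t = r + (t 1 - r 1) • Pi.single 1 1 := by
    ext k; fin_cases k <;> simp [h0]
  have hδ : t 1 - r 1 ≠ 0 := sub_ne_zero.mpr h1
  have hchord := gam_add_smul (μ := μ) hS.isHermitian r (Pi.single 1 1) (t 1 - r 1)
  have hnt : gamNormal S μ t 1 = gamNormal S μ r 1 + (t 1 - r 1) * S 1 1 := by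
    simp only [gamNormal, mulVec, dotProduct, Fin.sum_univ_two, Pi.add_apply, h0]
    ring
  rw [← htr, ht, hr] at hchord
  simp only [dotProduct_single, mulVec_single, MulOpposite.op_one, one_smul, single_dotProduct,
    col_apply, mul_one, one_mul] at hchord
  -- the normals at the two ends of a vertical chord have opposite second components
  have hrn' : gamNormal S μ r 1 = -((t 1 - r 1) * S 1 1) / 2 := by
    have := mul_left_cancel₀ hδ (show (t 1 - r 1) * (2 * gamNormal S μ r 1 + (t 1 - r 1) * S 1 1)
      = (t 1 - r 1) * 0 by linarith)
    linarith
  have hpos : 0 < (t 1 - r 1) * S 1 1 :=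
    lt_of_le_of_ne (by linarith) (mul_ne_zero hδ hS11.ne').symm
  linarith

theorem gam2_θray1 : gam2 R (θray1 S μ R) = 0 := by
  simp only [gam2, θray1, pvec1, Pi.smul_apply, smul_eq_mul, Matrix.cons_val_zero,
    Matrix.cons_val_one]
  ring

theorem pvec1_dotProduct_mulVec_pos (hS : S.PosDef) (hR : R 1 1 ≠ 0) :
    0 < pvec1 R ⬝ᵥ S *ᵥ pvec1 R := by
  have hp : pvec1 R ≠ 0 := fun h => hR (by simpa [pvec1] using congrFun h 0)
  simpa using hS.dotProduct_mulVec_pos hp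

theorem gam_θray1 (hS : S.PosDef) (hR : R 1 1 ≠ 0) : gam S μ (θray1 S μ R) = 0 :=
  gam_smul_eq_zero (pvec1_dotProduct_mulVec_pos hS hR).ne'

theorem gamNormal_θray1_one_nonpos (hS : S.PosDef) (hP : condP R) (hSR : condS μ R) {θm : V}
    (hθm : gam S μ θm = 0) (hx : θray1 S μ R 0 ≤ θm 0) (hγ : 0 < gam2 R θm) :
    gamNormal S μ (θray1 S μ R) 1 ≤ 0 := by
  set r := θray1 S μ R
  set n := gamNormal S μ r
  have hnp : n ⬝ᵥ pvec1 R = -(μ ⬝ᵥ pvec1 R) :=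
    gamNormal_smul_dotProduct (pvec1_dotProduct_mulVec_pos hS hP.2.1.ne').ne'
  have hμp : μ ⬝ᵥ pvec1 R < 0 := by
    simp only [pvec1, dotProduct, Fin.sum_univ_two, Matrix.cons_val_zero, Matrix.cons_val_one]
    linarith [hSR.1]
  have hsupp := gamNormal_dotProduct_sub_le (μ := μ) hS r θm
  rw [gam_θray1 hS hP.2.1.ne', hθm] at hsupp
  -- decompose `θm - r` along `pvec1 R`, which spans the line `γ₂ = 0`, and the vertical
  have hdecomp : R 1 1 * (n ⬝ᵥ (θm - r)) =
      (θm 0 - r 0) * (n ⬝ᵥ pvec1 R) + n 1 * (gam2 R θm - gam2 R r) := by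
    simp only [pvec1, gam2, dotProduct, Fin.sum_univ_two, Matrix.cons_val_zero,
      Matrix.cons_val_one, Pi.sub_apply]
    ring
  rw [gam2_θray1, sub_zero] at hdecomp
  have h1 : n 1 * gam2 R θm ≤ 0 := by
    nlinarith [mul_nonneg (sub_nonneg.mpr hx) (show 0 ≤ n ⬝ᵥ pvec1 R by linarith), hP.2.1]
  exact nonpos_of_mul_nonpos_left h1 hγ

theorem gamNormal_zero_nonpos_of_le (hS : S.PosDef) {t θm : V} (ht : gam S μ t = 0)
    (hn : 0 < gamNormal S μ t 1) (hθm : gam S μ θm = 0)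
    (hmax : ∀ θ, gam S μ θ = 0 → θ 1 ≤ θm 1) (hx : t 0 ≤ θm 0) : gamNormal S μ t 0 ≤ 0 := by
  have hsupp := gamNormal_dotProduct_sub_le (μ := μ) hS t θm
  rw [ht, hθm, sub_zero] at hsupp
  simp only [dotProduct, Fin.sum_univ_two, Pi.sub_apply] at hsupp
  have hy := hmax t ht
  rcases hx.lt_or_eq with hlt | heq
  · nlinarith [mul_nonneg hn.le (sub_nonneg.mpr hy)]
  · have hteq : t = θm := by
      ext k; fin_cases k
      · exact heq
      · rw [heq, sub_self, mul_zero, zero_add] at hsupp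
        exact show t 1 = θm 1 from le_antisymm hy (by nlinarith)
    rw [hteq, gamNormal_eq_zero_of_isMax hS (by decide) hθm hmax]

theorem dotProduct_le_of_mem_Gam (hS : S.PosDef) {t θ v : V} (ht : gam S μ t = 0)
    (hn : 0 < gamNormal S μ t 1) (hv : 0 ≤ v 1) (hθ : θ ∈ Gam S μ)
    (hcross : (θ 0 - t 0) * (gamNormal S μ t 1 * v 0 - gamNormal S μ t 0 * v 1) ≤ 0) :
    v ⬝ᵥ θ ≤ v ⬝ᵥ t := by
  have hsupp := gamNormal_dotProduct_sub_le (μ := μ) hS t θ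
  rw [ht] at hsupp
  have hθ' : 0 < gam S μ θ := hθ
  set n := gamNormal S μ t
  have hid : n 1 * (v ⬝ᵥ θ - v ⬝ᵥ t) =
      v 1 * (n ⬝ᵥ (θ - t)) + (θ 0 - t 0) * (n 1 * v 0 - n 0 * v 1) := by
    simp only [dotProduct, Fin.sum_univ_two, Pi.sub_apply]
    ring
  have : n 1 * (v ⬝ᵥ θ - v ⬝ᵥ t) ≤ 0 := by
    rw [hid]; nlinarith [mul_nonneg hv (show 0 ≤ -(n ⬝ᵥ (θ - t)) by linarith)]
  linarith [nonpos_of_mul_nonpos_right this hn]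

theorem sSup_image_Dset_eq_of_cross_nonpos (hS : S.PosDef) {t v : V} (ht : gam S μ t = 0)
    (hn : 0 < gamNormal S μ t 1) (hv : 0 ≤ v)
    (hcross : gamNormal S μ t 0 * v 1 - gamNormal S μ t 1 * v 0 ≤ 0) :
    sSup ((fun θ => v ⬝ᵥ θ) '' Dset S μ 0 (t 0)) = v ⬝ᵥ t := by
  have hcl := mem_closure_Dset_of_gamNormal_one_pos hS.isHermitian ht hn
  have hcl' : v ⬝ᵥ t ∈ closure ((fun θ => v ⬝ᵥ θ) '' Dset S μ 0 (t 0)) :=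
    image_closure_subset_closure_image (by fun_prop) ⟨t, hcl, rfl⟩
  refine (isLUB_of_mem_closure ?_ hcl').csSup_eq (closure_nonempty_iff.mp ⟨_, hcl'⟩)
  rintro _ ⟨θ, ⟨θ', hθ', hlt, hθ'0⟩, rfl⟩
  calc v ⬝ᵥ θ ≤ v ⬝ᵥ θ' := dotProduct_le_dotProduct_of_nonneg_left (fun k => (hlt k).le) hv
    _ ≤ v ⬝ᵥ t := dotProduct_le_of_mem_Gam hS ht hn (hv 1) hθ'
        (mul_nonpos_of_nonpos_of_nonneg (by linarith) (by linarith))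

theorem sSup_image_Dset_eq_sSup_image_Gam {i : Fin 2} {c : ℝ} {v : V} (hv : 0 ≤ v)
    (h : ∀ θ ∈ Gam S μ, ∃ z ∈ closure (Dset S μ i c), v ⬝ᵥ θ ≤ v ⬝ᵥ z) :
    sSup ((fun θ => v ⬝ᵥ θ) '' Dset S μ i c) = sSup ((fun θ => v ⬝ᵥ θ) '' Gam S μ) := by
  apply Real.sSup_eq_sSup_of_forall_exists_le_closure
  · rintro _ ⟨θ, ⟨θ', hθ', hlt, -⟩, rfl⟩
    exact ⟨_, mem_image_of_mem _ hθ',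
      dotProduct_le_dotProduct_of_nonneg_left (fun k => (hlt k).le) hv⟩
  · rintro _ ⟨θ, hθ, rfl⟩
    obtain ⟨z, hz, hle⟩ := h θ hθ
    exact ⟨_, image_closure_subset_closure_image (by fun_prop) ⟨z, hz, rfl⟩, hle⟩

theorem tθ1r_spec_of_gam2_pos {θmax1 tθ1r : V} (hS : S.PosDef)
    (hP : condP R) (hSR : condS μ R)
    (hmax1 : gam S μ θmax1 = 0 ∧ ∀ θ, gam S μ θ = 0 → θ 0 ≤ θmax1 0)
    (htθ1r : (θray1 S μ R = θmax1 ∧ tθ1r = θmax1) ∨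
      (θray1 S μ R ≠ θmax1 ∧ gam S μ tθ1r = 0 ∧
        tθ1r 0 = θray1 S μ R 0 ∧ tθ1r 1 ≠ θray1 S μ R 1))
    (hγ : 0 < gam2 R θmax1) :
    gam S μ tθ1r = 0 ∧ tθ1r 0 = θray1 S μ R 0 ∧ 0 < gamNormal S μ tθ1r 1 := by
  have hne : θray1 S μ R ≠ θmax1 := fun h => hγ.ne' (h ▸ gam2_θray1)
  obtain ⟨-, ht, h0, h1⟩ := htθ1r.resolve_left fun h => hne h.1
  have hr := gam_θray1 (μ := μ) hS hP.2.1.ne'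
  exact ⟨ht, h0, gamNormal_one_pos_of_vertical hS hr ht h0 h1
    (gamNormal_θray1_one_nonpos hS hP hSR hmax1.1 (hmax1.2 _ hr) hγ)⟩

end

theorem stmt_1_general
    (S R : Matrix (Fin 2) (Fin 2) ℝ) (μ : V)
    (hSpd : S.PosDef)
    (hP : condP R) (hS : condS μ R)
    (θmax1 θmax2 tθ1r : V)
    (hmax1 : gam S μ θmax1 = 0 ∧ ∀ θ, gam S μ θ = 0 → θ 0 ≤ θmax1 0)
    (hmax2 : gam S μ θmax2 = 0 ∧ ∀ θ, gam S μ θ = 0 → θ 1 ≤ θmax2 1)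
    (htθ1r : (θray1 S μ R = θmax1 ∧ tθ1r = θmax1) ∨
      (θray1 S μ R ≠ θmax1 ∧ gam S μ tθ1r = 0 ∧
        tθ1r 0 = θray1 S μ R 0 ∧ tθ1r 1 ≠ θray1 S μ R 1))
    (θΓ1 : V) (hθΓ1 : θΓ1 = if gam2 R θmax1 ≤ 0 then θmax1 else θray1 S μ R)
    (v : V) (hv1 : 0 ≤ v 0) (hv2 : 0 ≤ v 1)
    -- n = n^Γ(θ̃^(1,r)) = Σ θ̃^(1,r) + μ
    (n : V) (hn : n = S.mulVec tθ1r + μ) :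
    -- case (i)
    ((0 < gam2 R θmax1 → tθ1r 0 ≤ θmax2 0 →
        sSup ((fun θ => v ⬝ᵥ θ) '' Dset S μ 0 (θΓ1 0)) = v ⬝ᵥ tθ1r) ∧
    -- case (ii): v is below or on n
     (0 < gam2 R θmax1 → θmax2 0 < tθ1r 0 → n 0 * v 1 - n 1 * v 0 ≤ 0 →
        sSup ((fun θ => v ⬝ᵥ θ) '' Dset S μ 0 (θΓ1 0)) = v ⬝ᵥ tθ1r) ∧
    -- case (iii): v is above n
     (0 < gam2 R θmax1 → θmax2 0 < tθ1r 0 → 0 < n 0 * v 1 - n 1 * v 0 →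
        sSup ((fun θ => v ⬝ᵥ θ) '' Dset S μ 0 (θΓ1 0)) =
          sSup ((fun θ => v ⬝ᵥ θ) '' Gam S μ)) ∧
    -- case (iv)
     (gam2 R θmax1 ≤ 0 →
        sSup ((fun θ => v ⬝ᵥ θ) '' Dset S μ 0 (θΓ1 0)) =
          sSup ((fun θ => v ⬝ᵥ θ) '' Gam S μ))) := by
  replace hn : n = gamNormal S μ tθ1r := hn
  subst hn
  have hv : 0 ≤ v := fun k => by fin_cases k <;> assumption
  have ht := tθ1r_spec_of_gam2_pos hSpd hP hS hmax1 htθ1r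
  have hc : 0 < gam2 R θmax1 → θΓ1 0 = tθ1r 0 := fun hγ => by
    rw [hθΓ1, if_neg hγ.not_ge, (ht hγ).2.1]
  refine ⟨fun hγ hx => ?_, fun hγ _ hcross => ?_, fun hγ _ hcross => ?_, fun hγ => ?_⟩
  · obtain ⟨ht0, -, hn1⟩ := ht hγ
    have hn0 := gamNormal_zero_nonpos_of_le hSpd ht0 hn1 hmax2.1 hmax2.2 hx
    rw [hc hγ]
    exact sSup_image_Dset_eq_of_cross_nonpos hSpd ht0 hn1 hv
      (by nlinarith [mul_nonneg hn1.le hv1, mul_nonpos_of_nonpos_of_nonneg hn0 hv2])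
  · obtain ⟨ht0, -, hn1⟩ := ht hγ
    rw [hc hγ]
    exact sSup_image_Dset_eq_of_cross_nonpos hSpd ht0 hn1 hv hcross
  · obtain ⟨ht0, -, hn1⟩ := ht hγ
    rw [hc hγ]
    refine sSup_image_Dset_eq_sSup_image_Gam hv fun θ hθ => ?_
    by_cases hθ0 : θ 0 < tθ1r 0
    · exact ⟨θ, mem_closure_Dset hθ hθ0, le_rfl⟩
    · exact ⟨tθ1r, mem_closure_Dset_of_gamNormal_one_pos hSpd.isHermitian ht0 hn1,
        dotProduct_le_of_mem_Gam hSpd ht0 hn1 hv2 hθ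
          (mul_nonpos_of_nonneg_of_nonpos (by linarith) (by linarith))⟩
  · rw [hθΓ1, if_pos hγ]
    exact sSup_image_Dset_eq_sSup_image_Gam hv fun θ hθ =>
      ⟨θ, mem_closure_Dset hθ (lt_of_mem_Gam hSpd hmax1.2 hθ), le_rfl⟩

/-- geometric evaluation of `sup{⟨v,θ⟩ : θ ∈ 𝒟^(1)}` (Lemma 3.2). -/
theorem stmt_1
    (S R : Matrix (Fin 2) (Fin 2) ℝ) (μ : V)
    (hSpd : S.PosDef) (hSsym : S.IsSymm) (hμ : μ ≠ 0)
    (hP : condP R) (hS : condS μ R)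
    (θmax1 θmax2 tθ1r : V)
    (hmax1 : gam S μ θmax1 = 0 ∧ ∀ θ, gam S μ θ = 0 → θ 0 ≤ θmax1 0)
    (hmax2 : gam S μ θmax2 = 0 ∧ ∀ θ, gam S μ θ = 0 → θ 1 ≤ θmax2 1)
    (htθ1r : (θray1 S μ R = θmax1 ∧ tθ1r = θmax1) ∨
      (θray1 S μ R ≠ θmax1 ∧ gam S μ tθ1r = 0 ∧
        tθ1r 0 = θray1 S μ R 0 ∧ tθ1r 1 ≠ θray1 S μ R 1))
    (θΓ1 : V) (hθΓ1 : θΓ1 = if gam2 R θmax1 ≤ 0 then θmax1 else θray1 S μ R)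
    (v : V) (hv1 : 0 ≤ v 0) (hv2 : 0 ≤ v 1)
    -- n = n^Γ(θ̃^(1,r)) = Σ θ̃^(1,r) + μ
    (n : V) (hn : n = S.mulVec tθ1r + μ) :
    -- case (i)
    ((0 < gam2 R θmax1 → tθ1r 0 ≤ θmax2 0 →
        sSup ((fun θ => v ⬝ᵥ θ) '' Dset S μ 0 (θΓ1 0)) = v ⬝ᵥ tθ1r) ∧
    -- case (ii): v is below or on n
     (0 < gam2 R θmax1 → θmax2 0 < tθ1r 0 → n 0 * v 1 - n 1 * v 0 ≤ 0 →
        sSup ((fun θ => v ⬝ᵥ θ) '' Dset S μ 0 (θΓ1 0)) = v ⬝ᵥ tθ1r) ∧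
    -- case (iii): v is above n
     (0 < gam2 R θmax1 → θmax2 0 < tθ1r 0 → 0 < n 0 * v 1 - n 1 * v 0 →
        sSup ((fun θ => v ⬝ᵥ θ) '' Dset S μ 0 (θΓ1 0)) =
          sSup ((fun θ => v ⬝ᵥ θ) '' Gam S μ)) ∧
    -- case (iv)
     (gam2 R θmax1 ≤ 0 →
        sSup ((fun θ => v ⬝ᵥ θ) '' Dset S μ 0 (θΓ1 0)) =
          sSup ((fun θ => v ⬝ᵥ θ) '' Gam S μ))) :=
  stmt_1_general S R μ hSpd hP hS θmax1 θmax2 tθ1r hmax1 hmax2 htθ1r θΓ1 hθΓ1 v hv1 hv2 n hn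
end
end

section
/- Let Σ be a 2×2 real symmetric positive definite matrix and μ ∈ ℝ². Let θ ∈ ℝ² satisfy γ(θ) = 0, set a = Σθ + μ, and let ã = (⟨Σ⁻¹a, e⟩ / ⟨Σ⁻¹e, e⟩) e − (⟨a, n⟩ / ⟨Σn, n⟩) Σn, where e = (1, 0) and n = (0, 1). Then the point θ̃ = Σ⁻¹(ã − μ) satisfies γ(θ̃) = 0 and θ̃₁ = θ₁; moreover, θ̃ = θ if and only if ⟨a, n⟩ = 0, i.e., if and only if the second component of Σθ + μ is zero. -/
/-!
Write `a = Σθ + μ` as `a = p e + q Σn` (the coefficients `p`, `q` are exactly those in the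
definition of `ã`). Then `ã = a - 2q Σn`, so `θ̃ = θ - 2q n` lies on the vertical line
through `θ`. On that line `t ↦ γ(θ - t n)` is a quadratic vanishing at `t = 0` whose other
root is `2q = 2⟨a, n⟩ / ⟨Σn, n⟩`; hence `γ(θ̃) = γ(θ) = 0`, and `θ̃ = θ` iff `⟨a, n⟩ = 0`.
-/

open Matrix Set

noncomputable section

section

variable {ι : Type*} [Fintype ι] {S : Matrix ι ι ℝ}

lemma dotProduct_mulVec_comm_of_isSymm (hS : S.IsSymm) (v w : ι → ℝ) :
    v ⬝ᵥ S *ᵥ w = w ⬝ᵥ S *ᵥ v := by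
  rw [dotProduct_mulVec, ← mulVec_transpose, hS.eq, dotProduct_comm]

lemma mulVec_dotProduct_self_pos_of_posDef (hS : S.PosDef) {v : ι → ℝ} (hv : v ≠ 0) :
    0 < S *ᵥ v ⬝ᵥ v := by
  simpa [dotProduct_comm] using hS.dotProduct_mulVec_pos hv

lemma inv_mulVec_mulVec_of_posDef [DecidableEq ι] (hS : S.PosDef) (v : ι → ℝ) :
    S⁻¹ *ᵥ S *ᵥ v = v := by
  rw [mulVec_mulVec, nonsing_inv_mul _ ((isUnit_iff_isUnit_det S).mp hS.isUnit), one_mulVec]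

end

section

variable {S : Matrix (Fin 2) (Fin 2) ℝ}

lemma gam_sub_smul (hS : S.IsSymm) (μ θ v : V) (t : ℝ) :
    gam S μ (θ - t • v) =
      gam S μ θ + t * ((S *ᵥ θ + μ) ⬝ᵥ v) - t ^ 2 / 2 * (S *ᵥ v ⬝ᵥ v) := by
  simp only [gam, mulVec_sub, mulVec_smul, sub_dotProduct, dotProduct_sub, smul_dotProduct,
    dotProduct_smul, add_dotProduct, smul_eq_mul]
  linear_combination (t / 2) * dotProduct_mulVec_comm_of_isSymm hS θ v
    - t * dotProduct_comm (S *ᵥ θ) v + t ^ 2 / 2 * dotProduct_comm (S *ᵥ v) v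

lemma gam_sub_reflect (hS : S.IsSymm) (μ θ : V) {v : V} (hv : S *ᵥ v ⬝ᵥ v ≠ 0) :
    gam S μ (θ - (2 * ((S *ᵥ θ + μ) ⬝ᵥ v) / (S *ᵥ v ⬝ᵥ v)) • v) = gam S μ θ := by
  rw [gam_sub_smul hS]
  field_simp
  ring

lemma eq_smul_single_zero_of_apply_one_eq_zero {c : V} (h : c 1 = 0) : c = c 0 • ![1, 0] := by
  ext i
  fin_cases i <;> simp [h]

/-- Pairing with `n` kills `e`, and pairing with `Σ⁻¹ e` kills `Σn`, which determines `q` and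
then `p`. -/
lemma eq_smul_add_smul_mulVec (hS : S.PosDef) (a : V) :
    a = ((S⁻¹ *ᵥ a ⬝ᵥ ![1, 0]) / (S⁻¹ *ᵥ ![1, 0] ⬝ᵥ ![1, 0])) • ![1, 0] +
      ((a ⬝ᵥ ![0, 1]) / (S *ᵥ ![0, 1] ⬝ᵥ ![0, 1])) • S *ᵥ ![0, 1] := by
  set q := (a ⬝ᵥ ![0, 1]) / (S *ᵥ ![0, 1] ⬝ᵥ ![0, 1])
  set c := a - q • S *ᵥ ![0, 1] with hc
  have hn : S *ᵥ ![0, 1] ⬝ᵥ ![0, 1] ≠ 0 :=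
    (mulVec_dotProduct_self_pos_of_posDef hS (by simp)).ne'
  have he : 0 < S⁻¹ *ᵥ ![1, 0] ⬝ᵥ ![1, 0] :=
    mulVec_dotProduct_self_pos_of_posDef hS.inv (by simp)
  have hc1 : c 1 = 0 := by
    have : c ⬝ᵥ ![0, 1] = 0 := by
      rw [hc, sub_dotProduct, smul_dotProduct, smul_eq_mul, div_mul_cancel₀ _ hn, sub_self]
    simpa [dotProduct] using this
  have hce := eq_smul_single_zero_of_apply_one_eq_zero hc1
  have hp : S⁻¹ *ᵥ a ⬝ᵥ ![1, 0] = c 0 * (S⁻¹ *ᵥ ![1, 0] ⬝ᵥ ![1, 0]) := by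
    have ha : a = c 0 • ![1, 0] + q • S *ᵥ ![0, 1] := by rw [← hce, hc, sub_add_cancel]
    rw [ha, mulVec_add, mulVec_smul, mulVec_smul, inv_mulVec_mulVec_of_posDef hS]
    simp [dotProduct]
  rw [hp, mul_div_cancel_right₀ _ he.ne', ← hce, hc, sub_add_cancel]

end

/-- the point `θ̃ = Σ⁻¹(ã − μ)` is on the ellipse, has the same first
coordinate as `θ`, and coincides with `θ` iff the normal at `θ` is horizontal. -/
theorem stmt_10
    (S : Matrix (Fin 2) (Fin 2) ℝ) (μ θ : V)
    (hSpd : S.PosDef) (hSsym : S.IsSymm)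
    (hθ : gam S μ θ = 0)
    (e n : V) (he : e = ![1, 0]) (hn : n = ![0, 1])
    (a : V) (ha : a = S.mulVec θ + μ)
    (ta : V)
    (hta : ta = ((S⁻¹.mulVec a ⬝ᵥ e) / (S⁻¹.mulVec e ⬝ᵥ e)) • e -
      ((a ⬝ᵥ n) / (S.mulVec n ⬝ᵥ n)) • S.mulVec n)
    (tθ : V) (htθ : tθ = S⁻¹.mulVec (ta - μ)) :
    gam S μ tθ = 0 ∧ tθ 0 = θ 0 ∧ (tθ = θ ↔ (S.mulVec θ + μ) 1 = 0) := by
  subst he hn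
  have hSn : S *ᵥ ![0, 1] ⬝ᵥ ![0, 1] ≠ 0 :=
    (mulVec_dotProduct_self_pos_of_posDef hSpd (by simp)).ne'
  set t := 2 * (a ⬝ᵥ ![0, 1]) / (S *ᵥ ![0, 1] ⬝ᵥ ![0, 1]) with ht
  have hreflect : tθ = θ - t • ![0, 1] := by
    have hdec : _ = S *ᵥ θ + μ := (eq_smul_add_smul_mulVec hSpd a).symm.trans ha
    have hta' : ta - μ = S *ᵥ (θ - t • ![0, 1]) := by
      rw [hta, mulVec_sub, mulVec_smul, ht, mul_div_assoc]
      linear_combination (norm := module) hdec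
    rw [htθ, hta', inv_mulVec_mulVec_of_posDef hSpd]
  have ha1 : a ⬝ᵥ ![0, 1] = (S *ᵥ θ + μ) 1 := by
    rw [ha]
    simp [dotProduct]
  refine ⟨?_, by rw [hreflect]; simp, ?_⟩
  · rw [hreflect, ht, ha, gam_sub_reflect hSsym μ θ hSn, hθ]
  · rw [hreflect, sub_eq_self, smul_eq_zero, ht, ← ha1]
    simp only [div_eq_zero_iff, mul_eq_zero, two_ne_zero, hSn, false_or, or_false]
    simp
end
end
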